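/- arXiv:1810.08505 — 4 statements merged into one kernel-verified Lean document; each statement's English description precedes it below -/
import Mathlib

section
/- (Cauchy–Schwarz inequality for determinants) Let ℓ ≤ m and let A, B be m×ℓ real matrices. Then (det(Aᵀ B))² ≤ det(Aᵀ A) · det(Bᵀ B). -/
/-!
If `AᵀA` is singular, then `A` kills a nonzero vector, hence so does `BᵀA = (AᵀB)ᵀ`, and both
sides vanish. Otherwise split `B` into its orthogonal projection `A (AᵀA)⁻¹ AᵀB` onto the column
space of `A` and the residual `R`. This gives `BᵀB = (AᵀB)ᵀ (AᵀA)⁻¹ (AᵀB) + RᵀR`, a sum of two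
positive semidefinite matrices, and the determinant is monotone under adding a positive
semidefinite matrix. Since `det ((AᵀB)ᵀ (AᵀA)⁻¹ (AᵀB)) = det (AᵀB)² / det (AᵀA)`, the inequality
follows.
-/

open Matrix

namespace Matrix

variable {m n R : Type*} [Fintype m] [Fintype n]

theorem posSemidef_transpose_mul_self (A : Matrix m n ℝ) : (Aᵀ * A).PosSemidef := by
  simpa only [conjTranspose_eq_transpose_of_trivial] using posSemidef_conjTranspose_mul_self A

variable [DecidableEq n]

theorem det_transpose_mul_eq_zero [Field R] [LinearOrder R] [IsStrictOrderedRing R]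
    {A : Matrix m n R} (hA : (Aᵀ * A).det = 0) (B : Matrix m n R) : (Aᵀ * B).det = 0 := by
  obtain ⟨v, hv, hAAv⟩ := exists_mulVec_eq_zero_iff.mpr hA
  have hAv : A *ᵥ v = 0 :=
    (ker_mulVecLin_transpose_mul_self A).le (LinearMap.mem_ker.mpr hAAv)
  rw [← det_transpose, transpose_mul, transpose_transpose]
  exact exists_mulVec_eq_zero_iff.mp ⟨v, hv, by rw [← mulVec_mulVec, hAv, mulVec_zero]⟩

theorem transpose_mul_self_eq_add [CommRing R] (A B : Matrix m n R)
    (hA : IsUnit (Aᵀ * A).det) :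
    Bᵀ * B = (Aᵀ * B)ᵀ * (Aᵀ * A)⁻¹ * (Aᵀ * B) +
      (B - A * (Aᵀ * A)⁻¹ * (Aᵀ * B))ᵀ * (B - A * (Aᵀ * A)⁻¹ * (Aᵀ * B)) := by
  have hGi : ((Aᵀ * A)⁻¹)ᵀ = (Aᵀ * A)⁻¹ := by
    rw [transpose_nonsing_inv, transpose_mul, transpose_transpose]
  set K := A * (Aᵀ * A)⁻¹ * (Aᵀ * B) with hK
  have hBK : Bᵀ * K = (Aᵀ * B)ᵀ * (Aᵀ * A)⁻¹ * (Aᵀ * B) := by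
    simp only [hK, transpose_mul, transpose_transpose, Matrix.mul_assoc]
  have hKB : Kᵀ * B = (Aᵀ * B)ᵀ * (Aᵀ * A)⁻¹ * (Aᵀ * B) := by
    simp only [hK, transpose_mul, transpose_transpose, hGi, Matrix.mul_assoc]
  have hKK : Kᵀ * K = (Aᵀ * B)ᵀ * (Aᵀ * A)⁻¹ * (Aᵀ * B) := by
    simp only [hK, transpose_mul, transpose_transpose, hGi, Matrix.mul_assoc]
    rw [← Matrix.mul_assoc Aᵀ A, nonsing_inv_mul_cancel_left _ _ hA]
  rw [transpose_sub, Matrix.sub_mul, Matrix.mul_sub, Matrix.mul_sub, hBK, hKB, hKK]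
  abel

theorem one_le_eigenvalues_one_add {Z : Matrix n n ℝ} (hZ : Z.PosSemidef) (i : n) :
    1 ≤ (isHermitian_one.add hZ.isHermitian).eigenvalues i := by
  set h := isHermitian_one.add hZ.isHermitian
  set v := h.eigenvectorBasis i
  have hv : star (v : n → ℝ) ⬝ᵥ v = 1 := by
    rw [dotProduct_comm, ← EuclideanSpace.inner_eq_star_dotProduct,
      real_inner_self_eq_norm_sq, h.eigenvectorBasis.orthonormal.1 i, one_pow]
  rw [h.eigenvalues_eq, add_mulVec, one_mulVec, dotProduct_add, hv]
  simpa using hZ.dotProduct_mulVec_nonneg v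

theorem one_le_det_one_add {Z : Matrix n n ℝ} (hZ : Z.PosSemidef) : 1 ≤ (1 + Z).det := by
  rw [(isHermitian_one.add hZ.isHermitian).det_eq_prod_eigenvalues]
  exact Finset.one_le_prod fun i _ => by exact_mod_cast one_le_eigenvalues_one_add hZ i

open scoped MatrixOrder in
theorem PosSemidef.exists_eq_conjTranspose_mul_self {Y : Matrix n n ℝ} (hY : Y.PosSemidef) :
    ∃ D : Matrix n n ℝ, Y = Dᴴ * D :=
  ⟨CFC.sqrt Y, by
    rw [(CFC.sqrt_nonneg Y).posSemidef.isHermitian.eq, CFC.sqrt_mul_sqrt_self Y hY.nonneg]⟩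

/-- Writing `Y = DᴴD`, the matrix determinant lemma turns `det (X + Y)` into
`det X * det (1 + D X⁻¹ Dᴴ)`. -/
theorem det_le_det_add {X Y : Matrix n n ℝ} (hX : X.PosSemidef) (hY : Y.PosSemidef) :
    X.det ≤ (X + Y).det := by
  rcases hX.det_nonneg.eq_or_lt with hX0 | hX0
  · exact hX0 ▸ (hX.add hY).det_nonneg
  obtain ⟨D, rfl⟩ := hY.exists_eq_conjTranspose_mul_self
  rw [det_add_mul _ _ hX0.ne'.isUnit]
  exact le_mul_of_one_le_right hX0.le (one_le_det_one_add (hX.inv.mul_mul_conjTranspose_same D))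

end Matrix

theorem cauchy_schwarz_det_general {ℓ m : ℕ}
    (A B : Matrix (Fin m) (Fin ℓ) ℝ) :
    ((Aᵀ * B).det) ^ 2 ≤ (Aᵀ * A).det * (Bᵀ * B).det := by
  have hG := posSemidef_transpose_mul_self A
  by_cases hG0 : (Aᵀ * A).det = 0
  · rw [det_transpose_mul_eq_zero hG0 B, hG0]
    simp
  have hX : ((Aᵀ * B)ᵀ * (Aᵀ * A)⁻¹ * (Aᵀ * B)).PosSemidef := by
    simpa only [conjTranspose_eq_transpose_of_trivial] using
      hG.inv.conjTranspose_mul_mul_same (Aᵀ * B)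
  calc (Aᵀ * B).det ^ 2 = (Aᵀ * A).det * ((Aᵀ * B)ᵀ * (Aᵀ * A)⁻¹ * (Aᵀ * B)).det := by
        rw [det_mul, det_mul, det_transpose, det_nonsing_inv, Ring.inverse_eq_inv]
        field_simp
    _ ≤ (Aᵀ * A).det * (Bᵀ * B).det := by
        rw [transpose_mul_self_eq_add A B (Ne.isUnit hG0)]
        exact mul_le_mul_of_nonneg_left
          (det_le_det_add hX (posSemidef_transpose_mul_self _)) hG.det_nonneg

theorem cauchy_schwarz_det {ℓ m : ℕ} (hlm : ℓ ≤ m)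
    (A B : Matrix (Fin m) (Fin ℓ) ℝ) :
    ((Aᵀ * B).det) ^ 2 ≤ (Aᵀ * A).det * (Bᵀ * B).det :=
  cauchy_schwarz_det_general A B
end

section
/- Let ℓ ≤ m, let H ∈ ℝ^{ℓ×m}, and suppose Q ∈ ℝ^{m×ℓ} satisfies HQ = S with S lower triangular and every column of Q has Euclidean norm at most 1. Then (det S)² ≤ det(H Hᵀ). -/
/-!
Let `N` be the lower triangular matrix of the LDL decomposition of `H Hᵀ`, so that the rows
of `N H` are the Gram–Schmidt orthogonalisation of the rows of `H`. Then `N H Q = N S` is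
still lower triangular, and by Cauchy–Schwarz each of its diagonal entries squared is at most
the squared norm of the corresponding row of `N H`, i.e. the corresponding entry of the
diagonal matrix `(N H)(N H)ᵀ`. Taking products gives `(det N)² (det S)² ≤ (det N)² det (H Hᵀ)`.
If `H Hᵀ` is singular, some `v ≠ 0` has `vᵀ H = 0`, so `S = H Q` is singular as well.
-/

open Matrix

namespace Matrix

variable {ι κ : Type*} [Fintype κ]

theorem mul_apply_self_sq_le {R : Type*} [CommRing R] [LinearOrder R] [IsStrictOrderedRing R]
    (B : Matrix ι κ R) (Q : Matrix κ ι R) (i : ι) :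
    (B * Q) i i ^ 2 ≤ (B * Bᵀ) i i * ∑ k, Q k i ^ 2 := by
  simpa only [mul_apply, transpose_apply, sq] using Finset.sum_mul_sq_le_sq_mul_sq _ (B i) (Q · i)

variable [Fintype ι]

theorem det_mul_eq_zero_of_not_injective_vecMul {K : Type*} [Field K] [DecidableEq ι]
    {A : Matrix ι κ K} (hA : ¬ Function.Injective A.vecMul) (B : Matrix κ ι K) :
    (A * B).det = 0 := by
  have hAB : ¬ Function.Injective (A * B).vecMul := fun h =>
    hA (Function.Injective.of_comp (f := B.vecMul)
      (by simpa only [Function.comp_def, vecMul_vecMul]))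
  rwa [vecMul_injective_iff_isUnit, isUnit_iff_isUnit_det, isUnit_iff_ne_zero, not_not] at hAB

variable [LinearOrder ι]

theorem sq_det_mul_le_det_mul_transpose_of_isDiag {R : Type*} [CommRing R] [LinearOrder R]
    [IsStrictOrderedRing R] {B : Matrix ι κ R} {Q : Matrix κ ι R}
    (hB : (B * Bᵀ).IsDiag) (hBQ : (B * Q).IsLowerTriangular) (hQ : ∀ j, ∑ i, Q i j ^ 2 ≤ 1) :
    (B * Q).det ^ 2 ≤ (B * Bᵀ).det := by
  rw [det_of_isLowerTriangular _ hBQ, ← hB.diagonal_diag, det_diagonal, ← Finset.prod_pow]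
  refine Finset.prod_le_prod (fun i _ => sq_nonneg _) fun i _ => ?_
  calc (B * Q) i i ^ 2 ≤ (B * Bᵀ) i i * ∑ k, Q k i ^ 2 := mul_apply_self_sq_le B Q i
    _ ≤ (B * Bᵀ) i i := by
      refine mul_le_of_le_one_right ?_ (hQ i)
      simpa only [mul_apply, transpose_apply] using
        Finset.sum_nonneg fun k _ => mul_self_nonneg (B i k)

variable [WellFoundedLT ι] [LocallyFiniteOrderBot ι]

theorem sq_det_le_det_mul_transpose_of_posDef {H : Matrix ι κ ℝ} (hH : (H * Hᵀ).PosDef)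
    {Q : Matrix κ ι ℝ} (hHQ : (H * Q).IsLowerTriangular) (hQ : ∀ j, ∑ i, Q i j ^ 2 ≤ 1) :
    (H * Q).det ^ 2 ≤ (H * Hᵀ).det := by
  set N := LDL.lowerInv hH
  have hN : N.IsLowerTriangular := fun _ _ => LDL.lowerInv_triangular hH
  have hNdet : N.det ≠ 0 := (isUnit_det_of_invertible N).ne_zero
  have hdiag : (N * H) * (N * H)ᵀ = LDL.diag hH := by
    rw [LDL.diag_eq_lowerInv_conj, conjTranspose_eq_transpose_of_trivial, transpose_mul,
      Matrix.mul_assoc, Matrix.mul_assoc, Matrix.mul_assoc]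
  have hdet : ((N * H) * (N * H)ᵀ).det = N.det ^ 2 * (H * Hᵀ).det := by
    rw [transpose_mul, show N * H * (Hᵀ * Nᵀ) = N * (H * Hᵀ) * Nᵀ by simp only [Matrix.mul_assoc],
      det_mul, det_mul, det_transpose]
    ring
  have key := sq_det_mul_le_det_mul_transpose_of_isDiag (hdiag ▸ isDiag_diagonal _)
    (Matrix.mul_assoc N H Q ▸ hN.mul hHQ) hQ
  rw [hdet, Matrix.mul_assoc, det_mul, mul_pow] at key
  exact le_of_mul_le_mul_left key (by positivity)

end Matrix

theorem det_sq_le_det_HHt_general {ℓ m : ℕ}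
    (H : Matrix (Fin ℓ) (Fin m) ℝ) (Q : Matrix (Fin m) (Fin ℓ) ℝ)
    (S : Matrix (Fin ℓ) (Fin ℓ) ℝ)
    (hlow : ∀ i j, i < j → S i j = 0)
    (hHQ : H * Q = S)
    (hQ : ∀ j, ∑ i, (Q i j) ^ 2 ≤ 1) :
    (S.det) ^ 2 ≤ (H * Hᵀ).det := by
  subst hHQ
  by_cases hH : Function.Injective H.vecMul
  · have hHHt : (H * Hᵀ).PosDef := by
      simpa only [conjTranspose_eq_transpose_of_trivial] using PosDef.mul_conjTranspose_self H hH
    exact sq_det_le_det_mul_transpose_of_posDef hHHt (fun _ _ => hlow _ _) hQ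
  · rw [det_mul_eq_zero_of_not_injective_vecMul hH Q,
      det_mul_eq_zero_of_not_injective_vecMul hH Hᵀ]
    norm_num

theorem det_sq_le_det_HHt {ℓ m : ℕ} (hlm : ℓ ≤ m)
    (H : Matrix (Fin ℓ) (Fin m) ℝ) (Q : Matrix (Fin m) (Fin ℓ) ℝ)
    (S : Matrix (Fin ℓ) (Fin ℓ) ℝ)
    (hlow : ∀ i j, i < j → S i j = 0)
    (hHQ : H * Q = S)
    (hQ : ∀ j, ∑ i, (Q i j) ^ 2 ≤ 1) :
    (S.det) ^ 2 ≤ (H * Hᵀ).det :=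
  det_sq_le_det_HHt_general H Q S hlow hHQ hQ
end

section
/- (Upper-bound half of the geometric-mean SOCP, general ℓ even) With notation as in the geometric-mean SOCP problem (ℓ even, g ≥ 0, p = ⌈log₂ ℓ⌉), any nonnegative reals u₁,…,u_{2^p−1} satisfying all constraints obey u₁^{2^p} ≤ ∏_{i=2^{p−1}}^{2^p−1} uᵢ², and ∏_{i=2^{p−1}}^{2^p−1} uᵢ² ≤ (∏_{j=1}^{ℓ} gⱼ) · u₁^{2^p−ℓ}; combining these gives u₁^ℓ ≤ ∏ⱼ gⱼ. -/
/-!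
Read `u` as a binary tree in heap order: node `i` has children `2i` and `2i + 1`, and level `k`
consists of the nodes `2^k ≤ i < 2^(k+1)`. By the constraint `u i ^ 2 ≤ u (2i) u (2i+1)`, the product of
the squares over a level dominates the square of the product of the squares over the level above, so
`u 1 ^ 2^p` is bounded by the product of the squares over the bottom level `p - 1`. There the first
`ℓ / 2` nodes are bounded by consecutive pairs of the `g j`, and the remaining `2^(p-1) - ℓ / 2`
nodes by `u 1`. Cancelling `u 1 ^ (2^p - ℓ)` gives `u 1 ^ ℓ ≤ ∏ g j`.
-/

open Finset

theorem prod_Ico_two_mul_eq_prod_Ico_pairs {M : Type*} [CommMonoid M] (f : ℕ → M) (a n : ℕ) :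
    ∏ j ∈ Ico (2 * a) (2 * a + 2 * n), f j = ∏ i ∈ Ico a (a + n), f (2 * i) * f (2 * i + 1) := by
  induction n with
  | zero => simp
  | succ n ih =>
    rw [← add_assoc, prod_Ico_succ_top (by omega), ← ih, mul_add_one, ← add_assoc,
      prod_Ico_succ_top (by omega), prod_Ico_succ_top (by omega), mul_add, mul_assoc]

section

variable {R : Type*} [CommRing R] [LinearOrder R] [IsStrictOrderedRing R]

theorem sq_prod_Ico_le_prod_Ico_two_mul {u : ℕ → R} {a n : ℕ}
    (h : ∀ i ∈ Ico a (a + n), u i ^ 2 ≤ u (2 * i) * u (2 * i + 1)) :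
    (∏ i ∈ Ico a (a + n), u i ^ 2) ^ 2 ≤ ∏ j ∈ Ico (2 * a) (2 * a + 2 * n), u j ^ 2 := by
  rw [prod_Ico_two_mul_eq_prod_Ico_pairs, ← prod_pow]
  refine prod_le_prod (fun i _ => by positivity) fun i hi => ?_
  rw [← mul_pow]
  exact pow_le_pow_left₀ (sq_nonneg _) (h i hi) 2

theorem pow_two_pow_le_prod_Ico_two_pow {u : ℕ → R} (k : ℕ)
    (h : ∀ i, 1 ≤ i → i < 2 ^ k → u i ^ 2 ≤ u (2 * i) * u (2 * i + 1)) :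
    u 1 ^ 2 ^ (k + 1) ≤ ∏ i ∈ Ico (2 ^ k) (2 ^ (k + 1)), u i ^ 2 := by
  induction k with
  | zero => simp
  | succ k ih =>
    have hlevel : ∀ i ∈ Ico (2 ^ k) (2 ^ k + 2 ^ k), u i ^ 2 ≤ u (2 * i) * u (2 * i + 1) :=
      fun i hi => h i (le_trans Nat.one_le_two_pow (mem_Ico.1 hi).1)
        (by have := (mem_Ico.1 hi).2; rw [pow_succ]; omega)
    calc u 1 ^ 2 ^ (k + 1 + 1) = (u 1 ^ 2 ^ (k + 1)) ^ 2 := by rw [← pow_mul, ← pow_succ]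
      _ ≤ (∏ i ∈ Ico (2 ^ k) (2 ^ k + 2 ^ k), u i ^ 2) ^ 2 := by
        rw [← two_mul, ← pow_succ']
        exact pow_le_pow_left₀ ((Nat.even_pow.2 ⟨even_two, by simp⟩).pow_nonneg _)
          (ih fun i hi hik => h i hi (hik.trans (Nat.pow_lt_pow_succ one_lt_two))) 2
      _ ≤ ∏ j ∈ Ico (2 * 2 ^ k) (2 * 2 ^ k + 2 * 2 ^ k), u j ^ 2 :=
        sq_prod_Ico_le_prod_Ico_two_mul hlevel
      _ = ∏ j ∈ Ico (2 ^ (k + 1)) (2 ^ (k + 1 + 1)), u j ^ 2 := by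
        rw [← two_mul, ← pow_succ', ← pow_succ']

theorem prod_Ico_sq_le_prod_Icc {u g : ℕ → R} {q m : ℕ}
    (h : ∀ i ∈ Ico q (q + m), u i ^ 2 ≤ g (2 * i - 2 * q + 1) * g (2 * i - 2 * q + 2)) :
    ∏ i ∈ Ico q (q + m), u i ^ 2 ≤ ∏ j ∈ Icc 1 (2 * m), g j := by
  calc ∏ i ∈ Ico q (q + m), u i ^ 2
      ≤ ∏ i ∈ Ico q (q + m), g (2 * i - 2 * q + 1) * g (2 * i - 2 * q + 2) :=
        prod_le_prod (fun i _ => sq_nonneg _) h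
    _ = ∏ j ∈ Ico (2 * q) (2 * q + 2 * m), g (j - 2 * q + 1) := by
        rw [prod_Ico_two_mul_eq_prod_Ico_pairs]
        refine prod_congr rfl fun i hi => ?_
        have := (mem_Ico.1 hi).1
        congr 2
        omega
    _ = ∏ j ∈ Icc 1 (2 * m), g j := by
        rw [prod_Ico_eq_prod_range, ← Ico_add_one_right_eq_Icc, prod_Ico_eq_prod_range]
        refine prod_congr (by congr 1; omega) fun j _ => ?_
        congr 1
        omega

theorem prod_Ico_sq_le_pow {u : ℕ → R} {c : R} {a b : ℕ}
    (h : ∀ i ∈ Ico a b, 0 ≤ u i ∧ u i ≤ c) :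
    ∏ i ∈ Ico a b, u i ^ 2 ≤ c ^ (2 * (b - a)) := by
  calc ∏ i ∈ Ico a b, u i ^ 2 ≤ ∏ _i ∈ Ico a b, c ^ 2 :=
        prod_le_prod (fun i _ => sq_nonneg _) fun i hi => pow_le_pow_left₀ (h i hi).1 (h i hi).2 2
    _ = c ^ (2 * (b - a)) := by rw [prod_const, Nat.card_Ico, ← pow_mul]

theorem pow_le_of_pow_add_le_mul_pow {x G : R} {a b : ℕ} (hx : 0 ≤ x) (hG : 0 ≤ G) (ha : a ≠ 0)
    (h : x ^ (a + b) ≤ G * x ^ b) : x ^ a ≤ G := by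
  rcases hx.eq_or_lt with rfl | hpos
  · rwa [zero_pow ha]
  · rw [pow_add] at h
    exact le_of_mul_le_mul_right h (pow_pos hpos b)

end

theorem geometric_mean_socp_upper_bound_general (ℓ p : ℕ) (hℓ : 0 < ℓ) (heven : Even ℓ)
    (hp2 : ℓ ≤ 2 ^ p)
    (g : ℕ → ℝ)
    (u : ℕ → ℝ)
    (hu0 : ∀ i, 1 ≤ i → i ≤ 2 ^ p - 1 → 0 ≤ u i)
    (hu1 : ∀ i, 1 ≤ i → i ≤ 2 ^ (p - 1) - 1 →
      (u i) ^ 2 ≤ u (2 * i) * u (2 * i + 1))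
    (hu2 : ∀ i, 2 ^ (p - 1) ≤ i → i ≤ 2 ^ (p - 1) + ℓ / 2 - 1 →
      (u i) ^ 2 ≤ g (2 * i - 2 ^ p + 1) * g (2 * i - 2 ^ p + 2))
    (hu3 : ∀ i, 2 ^ (p - 1) + ℓ / 2 ≤ i → i ≤ 2 ^ p - 1 → u i ≤ u 1) :
    u 1 ^ (2 ^ p) ≤ ∏ i ∈ Finset.Icc (2 ^ (p - 1)) (2 ^ p - 1), (u i) ^ 2
    ∧ ∏ i ∈ Finset.Icc (2 ^ (p - 1)) (2 ^ p - 1), (u i) ^ 2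
        ≤ (∏ j ∈ Finset.Icc 1 ℓ, g j) * u 1 ^ (2 ^ p - ℓ)
    ∧ u 1 ^ ℓ ≤ ∏ j ∈ Finset.Icc 1 ℓ, g j := by
  obtain ⟨m, rfl⟩ := heven
  obtain ⟨k, rfl⟩ : ∃ k, p = k + 1 :=
    Nat.exists_eq_add_one.2 (Nat.pos_of_ne_zero (by rintro rfl; simp at hp2; omega))
  rw [Nat.add_sub_cancel] at hu1 hu2 hu3 ⊢
  have hq : 2 ^ (k + 1) = 2 * 2 ^ k := pow_succ' 2 k
  set G := ∏ j ∈ Icc 1 (m + m), g j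
  have hsplit : ∏ i ∈ Icc (2 ^ k) (2 ^ (k + 1) - 1), u i ^ 2 =
      (∏ i ∈ Ico (2 ^ k) (2 ^ k + m), u i ^ 2) * ∏ i ∈ Ico (2 ^ k + m) (2 ^ (k + 1)), u i ^ 2 := by
    rw [prod_Ico_consecutive _ (by omega) (by omega), ← Ico_add_one_right_eq_Icc,
      Nat.sub_add_cancel Nat.one_le_two_pow]
  have hlevels : u 1 ^ 2 ^ (k + 1) ≤ ∏ i ∈ Icc (2 ^ k) (2 ^ (k + 1) - 1), u i ^ 2 := by
    rw [← Ico_add_one_right_eq_Icc, Nat.sub_add_cancel Nat.one_le_two_pow]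
    exact pow_two_pow_le_prod_Ico_two_pow k fun i hi hik => hu1 i hi (by omega)
  have hleaves : ∏ i ∈ Ico (2 ^ k) (2 ^ k + m), u i ^ 2 ≤ G := by
    refine (prod_Ico_sq_le_prod_Icc fun i hi => ?_).trans_eq (by rw [two_mul])
    rw [← hq]
    exact hu2 i (mem_Ico.1 hi).1 (by have := (mem_Ico.1 hi).2; omega)
  have hrest : ∏ i ∈ Ico (2 ^ k + m) (2 ^ (k + 1)), u i ^ 2 ≤ u 1 ^ (2 ^ (k + 1) - (m + m)) := by
    refine (prod_Ico_sq_le_pow fun i hi => ?_).trans_eq (by congr 1; omega)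
    obtain ⟨hlo, hhi⟩ := mem_Ico.1 hi
    exact ⟨hu0 i (by omega) (by omega), hu3 i (by omega) (by omega)⟩
  have hG : 0 ≤ G := (prod_nonneg fun _ _ => sq_nonneg _).trans hleaves
  have hbound : ∏ i ∈ Icc (2 ^ k) (2 ^ (k + 1) - 1), u i ^ 2 ≤ G * u 1 ^ (2 ^ (k + 1) - (m + m)) :=
    hsplit ▸ mul_le_mul hleaves hrest (prod_nonneg fun _ _ => sq_nonneg _) hG
  refine ⟨hlevels, hbound,
    pow_le_of_pow_add_le_mul_pow (b := 2 ^ (k + 1) - (m + m)) (hu0 1 le_rfl (by omega)) hG hℓ.ne' ?_⟩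
  rw [Nat.add_sub_of_le hp2]
  exact hlevels.trans hbound

theorem geometric_mean_socp_upper_bound (ℓ p : ℕ) (hℓ : 0 < ℓ) (heven : Even ℓ)
    (hp1 : 2 ^ (p - 1) < ℓ) (hp2 : ℓ ≤ 2 ^ p)
    (g : ℕ → ℝ) (hg : ∀ j, 1 ≤ j → j ≤ ℓ → 0 ≤ g j)
    (u : ℕ → ℝ)
    (hu0 : ∀ i, 1 ≤ i → i ≤ 2 ^ p - 1 → 0 ≤ u i)
    (hu1 : ∀ i, 1 ≤ i → i ≤ 2 ^ (p - 1) - 1 →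
      (u i) ^ 2 ≤ u (2 * i) * u (2 * i + 1))
    (hu2 : ∀ i, 2 ^ (p - 1) ≤ i → i ≤ 2 ^ (p - 1) + ℓ / 2 - 1 →
      (u i) ^ 2 ≤ g (2 * i - 2 ^ p + 1) * g (2 * i - 2 ^ p + 2))
    (hu3 : ∀ i, 2 ^ (p - 1) + ℓ / 2 ≤ i → i ≤ 2 ^ p - 1 → u i ≤ u 1) :
    u 1 ^ (2 ^ p) ≤ ∏ i ∈ Finset.Icc (2 ^ (p - 1)) (2 ^ p - 1), (u i) ^ 2
    ∧ ∏ i ∈ Finset.Icc (2 ^ (p - 1)) (2 ^ p - 1), (u i) ^ 2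
        ≤ (∏ j ∈ Finset.Icc 1 ℓ, g j) * u 1 ^ (2 ^ p - ℓ)
    ∧ u 1 ^ ℓ ≤ ∏ j ∈ Finset.Icc 1 ℓ, g j :=
  geometric_mean_socp_upper_bound_general ℓ p hℓ heven hp2 g u hu0 hu1 hu2 hu3
end

section
/- Let K be a reproducing kernel for a real Hilbert space H of functions on Ω, let x₁,…,xₙ ∈ Ω be points with invertible kernel matrix 𝒦, and let u(x) = 𝒦⁻¹k(x) be the cardinal basis vector. Then for every f ∈ H and x ∈ Ω, |f(x) − ∑ⱼ f(xⱼ)uⱼ(x)| ≤ ‖f‖_H · √(K(x,x) − k(x)ᵀ𝒦⁻¹k(x)). -/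
/-!
The interpolation error at `x` is the inner product of `f` with the residual
`v = Φ x - ∑ j, u j • Φ (xs j)`, so Cauchy–Schwarz bounds it by `‖f‖ * ‖v‖`. The system
`𝒦 u = k(x)` says exactly that `v` is orthogonal to every `Φ (xs i)`, whence
`‖v‖ ^ 2 = ⟪Φ x, v⟫ = K x x - k(x) ⬝ᵥ u`.
-/

open Matrix

open scoped InnerProductSpace

section GramResidual

variable {ι E : Type*} [Fintype ι] [NormedAddCommGroup E] [InnerProductSpace ℝ E]
  {b : ι → E} {e : E} {c : ι → ℝ}

theorem inner_sub_sum_smul_eq_zero_of_gram_mulVec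
    (hc : gram ℝ b *ᵥ c = fun i => ⟪e, b i⟫_ℝ) (i : ι) :
    ⟪b i, e - ∑ j, c j • b j⟫_ℝ = 0 := by
  have hci : ∑ j, ⟪b i, b j⟫_ℝ * c j = ⟪e, b i⟫_ℝ := congrFun hc i
  simp only [inner_sub_right, inner_sum, real_inner_smul_right, mul_comm (c _), hci,
    real_inner_comm, sub_self]

theorem norm_sub_sum_smul_sq_of_gram_mulVec
    (hc : gram ℝ b *ᵥ c = fun i => ⟪e, b i⟫_ℝ) :
    ‖e - ∑ j, c j • b j‖ ^ 2 = ⟪e, e⟫_ℝ - (fun i => ⟪e, b i⟫_ℝ) ⬝ᵥ c := by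
  have horth := inner_sub_sum_smul_eq_zero_of_gram_mulVec hc
  calc ‖e - ∑ j, c j • b j‖ ^ 2
      = ⟪e, e - ∑ j, c j • b j⟫_ℝ - ∑ j, c j * ⟪b j, e - ∑ j, c j • b j⟫_ℝ := by
        rw [← real_inner_self_eq_norm_sq, inner_sub_left, sum_inner]
        simp only [real_inner_smul_left]
    _ = ⟪e, e - ∑ j, c j • b j⟫_ℝ := by
        simp only [horth, mul_zero, Finset.sum_const_zero, sub_zero]
    _ = ⟪e, e⟫_ℝ - (fun i => ⟪e, b i⟫_ℝ) ⬝ᵥ c := by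
        simp only [inner_sub_right, inner_sum, real_inner_smul_right, dotProduct, mul_comm (c _)]

theorem abs_inner_sub_sum_le_of_gram_mulVec
    (hc : gram ℝ b *ᵥ c = fun i => ⟪e, b i⟫_ℝ) (f : E) :
    |⟪f, e⟫_ℝ - ∑ j, c j * ⟪f, b j⟫_ℝ|
      ≤ ‖f‖ * Real.sqrt (⟪e, e⟫_ℝ - (fun i => ⟪e, b i⟫_ℝ) ⬝ᵥ c) := by
  have hf : ⟪f, e⟫_ℝ - ∑ j, c j * ⟪f, b j⟫_ℝ = ⟪f, e - ∑ j, c j • b j⟫_ℝ := by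
    simp only [inner_sub_right, inner_sum, real_inner_smul_right]
  rw [hf, ← norm_sub_sum_smul_sq_of_gram_mulVec hc, Real.sqrt_sq (norm_nonneg _)]
  exact abs_real_inner_le_norm f _

end GramResidual

theorem kernel_interp_error_bound {Ω : Type*} {n : ℕ}
    {H : Type*} [NormedAddCommGroup H] [InnerProductSpace ℝ H]
    (K : Ω → Ω → ℝ) (Φ : Ω → H)
    (hrepr : ∀ x y, K x y = inner ℝ (Φ x) (Φ y))
    (xs : Fin n → Ω)
    (hK : IsUnit (Matrix.of fun i j => K (xs i) (xs j)).det)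
    (f : H) (x : Ω) :
    |(inner ℝ f (Φ x) : ℝ) -
        ∑ j, ((Matrix.of fun i j => K (xs i) (xs j))⁻¹ *ᵥ
            (fun i => K x (xs i))) j * (inner ℝ f (Φ (xs j)) : ℝ)|
      ≤ ‖f‖ * Real.sqrt (K x x - (fun i => K x (xs i)) ⬝ᵥ
          ((Matrix.of fun i j => K (xs i) (xs j))⁻¹ *ᵥ (fun i => K x (xs i)))) := by
  have hgram : (Matrix.of fun i j => K (xs i) (xs j)) = gram ℝ (fun j => Φ (xs j)) := by
    ext i j
    exact hrepr _ _
  have hk : (fun i => K x (xs i)) = fun i => ⟪Φ x, Φ (xs i)⟫_ℝ := funext fun i => hrepr _ _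
  rw [hgram] at hK
  rw [hgram, hk, hrepr x x]
  refine abs_inner_sub_sum_le_of_gram_mulVec ?_ f
  rw [mulVec_mulVec, mul_nonsing_inv _ hK, one_mulVec]
end
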